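/- Let α ∈ ℝ, μ > 0, c > 0, x₀ ∈ ℝ, and set k = ½ √( c / (μ(1+c)) ) and v = α(1+c). Define u(x,t) = 3c · sech²( k (x − v t − x₀) ), where sech z = 1/cosh z. Then u satisfies the one-dimensional regularized long-wave equation ∂ₜu + α ∂ₓu + α u ∂ₓu − μ ∂ₓₓₜu = 0 for all x ∈ ℝ and t ∈ ℝ. -/

import Mathlib

/-!
Write `T = tanh`, so that `T' = 1 - T²` and `sech² = 1 - T²`. The profile `w = 1 - T²` satisfies
`w' = -2 T w` and the soliton equation `w'' = 4 w - 6 w²`, hence `w''' = (4 - 12 w) w'`. For a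
travelling wave `u(x, t) = g (k (x - v t - x₀))` the RLW residual is
`k g' (α - v + α g) + μ k³ v g'''`; with `g = 3 c w` this is
`3 c k α w' (1 - 3 w) (4 μ k² (1 + c) - c)`, which vanishes by the choice of `k`.
-/

open Real

noncomputable section

def rlwResidual (α μ : ℝ) (u : ℝ → ℝ → ℝ) (x t : ℝ) : ℝ :=
  deriv (fun s => u x s) t
    + α * deriv (fun a => u a t) x
    + α * u x t * deriv (fun a => u a t) x
    - μ * deriv (fun s => deriv (fun a => deriv (fun b => u b s) a) x) t

def travellingWave (g : ℝ → ℝ) (k v x₀ : ℝ) : ℝ → ℝ → ℝ :=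
  fun x t => g (k * (x - v * t - x₀))

end

section TravellingWave

variable {g g₁ : ℝ → ℝ} {k v x₀ : ℝ}

theorem hasDerivAt_travellingWave_space (hg : ∀ z, HasDerivAt g (g₁ z) z) (x t : ℝ) :
    HasDerivAt (fun a => travellingWave g k v x₀ a t) (k * travellingWave g₁ k v x₀ x t) x := by
  have hξ : HasDerivAt (fun a => k * (a - v * t - x₀)) k x := by
    simpa using (((hasDerivAt_id x).sub_const (v * t)).sub_const x₀).const_mul k
  rw [mul_comm]
  exact (hg _).comp x hξ

theorem hasDerivAt_travellingWave_time (hg : ∀ z, HasDerivAt g (g₁ z) z) (x t : ℝ) :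
    HasDerivAt (fun s => travellingWave g k v x₀ x s) (-(k * v) * travellingWave g₁ k v x₀ x t)
      t := by
  have hξ : HasDerivAt (fun s => k * (x - v * s - x₀)) (-(k * v)) t := by
    simpa using ((((hasDerivAt_id t).const_mul v).const_sub x).sub_const x₀).const_mul k
  rw [mul_comm]
  exact (hg _).comp t hξ

theorem deriv_travellingWave_space (hg : ∀ z, HasDerivAt g (g₁ z) z) (t : ℝ) :
    deriv (fun a => travellingWave g k v x₀ a t) = fun a => k * travellingWave g₁ k v x₀ a t :=
  funext fun a => (hasDerivAt_travellingWave_space hg a t).deriv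

theorem deriv_travellingWave_time (hg : ∀ z, HasDerivAt g (g₁ z) z) (x : ℝ) :
    deriv (fun s => travellingWave g k v x₀ x s)
      = fun s => -(k * v) * travellingWave g₁ k v x₀ x s :=
  funext fun s => (hasDerivAt_travellingWave_time hg x s).deriv

theorem rlwResidual_travellingWave {g₂ g₃ : ℝ → ℝ} (α μ : ℝ) (h₁ : ∀ z, HasDerivAt g (g₁ z) z)
    (h₂ : ∀ z, HasDerivAt g₁ (g₂ z) z) (h₃ : ∀ z, HasDerivAt g₂ (g₃ z) z) (x t : ℝ) :
    rlwResidual α μ (travellingWave g k v x₀) x t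
      = k * g₁ (k * (x - v * t - x₀)) * (α - v + α * g (k * (x - v * t - x₀)))
        + μ * k ^ 3 * v * g₃ (k * (x - v * t - x₀)) := by
  have hxx : ∀ s, deriv (fun a => deriv (fun b => travellingWave g k v x₀ b s) a)
      = fun a => k * (k * travellingWave g₂ k v x₀ a s) := fun s => by
    rw [deriv_travellingWave_space h₁]
    exact funext fun a => ((hasDerivAt_travellingWave_space h₂ a s).const_mul k).deriv
  have hxxt : HasDerivAt (fun s => deriv (fun a => deriv (fun b => travellingWave g k v x₀ b s) a) x)
      (k * (k * (-(k * v) * travellingWave g₃ k v x₀ x t))) t := by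
    simp only [hxx]
    exact ((hasDerivAt_travellingWave_time h₃ x t).const_mul k).const_mul k
  rw [rlwResidual, deriv_travellingWave_time h₁, deriv_travellingWave_space h₁, hxxt.deriv]
  simp only [travellingWave]
  ring

end TravellingWave

theorem Real.hasDerivAt_tanh (x : ℝ) : HasDerivAt tanh (1 - tanh x ^ 2) x := by
  have hcosh := (cosh_pos x).ne'
  have h := (hasDerivAt_sinh x).div (hasDerivAt_cosh x) hcosh
  rw [show sinh / cosh = tanh from funext fun y => (tanh_eq_sinh_div_cosh y).symm] at h
  refine h.congr_deriv ?_
  rw [tanh_eq_sinh_div_cosh]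
  field_simp

theorem Real.one_div_cosh_sq (x : ℝ) : (1 / cosh x) ^ 2 = 1 - tanh x ^ 2 := by
  have hcosh := (cosh_pos x).ne'
  rw [tanh_eq_sinh_div_cosh]
  field_simp
  rw [cosh_sq]
  ring

theorem hasDerivAt_one_sub_tanh_sq (z : ℝ) :
    HasDerivAt (fun z => 1 - tanh z ^ 2) (-2 * tanh z * (1 - tanh z ^ 2)) z := by
  exact (((hasDerivAt_tanh z).pow 2).const_sub 1).congr_deriv (by ring)

theorem hasDerivAt_neg_two_mul_tanh_mul_one_sub_tanh_sq (z : ℝ) :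
    HasDerivAt (fun z => -2 * tanh z * (1 - tanh z ^ 2))
      (4 * (1 - tanh z ^ 2) - 6 * (1 - tanh z ^ 2) ^ 2) z := by
  exact (((hasDerivAt_tanh z).const_mul (-2)).mul (hasDerivAt_one_sub_tanh_sq z)).congr_deriv (by ring)

theorem HasDerivAt.four_mul_sub_six_mul_sq {w : ℝ → ℝ} {w' z : ℝ} (hw : HasDerivAt w w' z) :
    HasDerivAt (fun z => 4 * w z - 6 * w z ^ 2) ((4 - 12 * w z) * w') z := by
  exact ((hw.const_mul 4).sub ((hw.pow 2).const_mul 6)).congr_deriv (by ring)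

theorem rlw1d_solitary_wave_solution
    (α μ c x₀ : ℝ) (hμ : 0 < μ) (hc : 0 < c)
    (k v : ℝ)
    (hk : k = (1/2) * Real.sqrt (c / (μ * (1 + c))))
    (hv : v = α * (1 + c))
    (u : ℝ → ℝ → ℝ)
    (hu : ∀ x t, u x t = 3 * c * (1 / Real.cosh (k * (x - v * t - x₀)))^2) :
    ∀ x t : ℝ,
      deriv (fun s => u x s) t
        + α * deriv (fun a => u a t) x
        + α * u x t * deriv (fun a => u a t) x
        - μ * deriv (fun s => deriv (fun a => deriv (fun b => u b s) a) x) t = 0 := by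
  have hk2 : 4 * μ * (1 + c) * k ^ 2 = c := by
    rw [hk, mul_pow, sq_sqrt (by positivity)]
    field_simp
    ring
  have hwave : u = travellingWave (fun z => 3 * c * (1 - tanh z ^ 2)) k v x₀ := by
    funext x t
    rw [hu, one_div_cosh_sq, travellingWave]
  intro x t
  change rlwResidual α μ u x t = 0
  rw [hwave, rlwResidual_travellingWave α μ (fun z => (hasDerivAt_one_sub_tanh_sq z).const_mul _)
    (fun z => (hasDerivAt_neg_two_mul_tanh_mul_one_sub_tanh_sq z).const_mul _)
    (fun z => (hasDerivAt_one_sub_tanh_sq z).four_mul_sub_six_mul_sq.const_mul (3 * c)), hv]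
  set T := tanh (k * (x - α * (1 + c) * t - x₀))
  linear_combination -6 * c * k * α * T * (1 - T ^ 2) * (1 - 3 * (1 - T ^ 2)) * hk2
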